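/- If D' ⊆ D is concise w.r.t. D, (x,y) ∉ D is a new example, and the AACBR inference from D' predicts (x,y), then (x,y) is not includable w.r.t. D', and D' remains concise w.r.t. D ∪ {(x,y)}. -/

import Mathlib

/-- `(x,y)` is surprising w.r.t. `D'`: without it, the classifier predicts differently. -/
def Surprising {X Y : Type*} (C : Set (X × Y) → X → Y) (D' : Set (X × Y)) (e : X × Y) : Prop :=
  C (D' \ {e}) e.1 ≠ e.2

/-- `(x,y)` is sufficient w.r.t. `D'`: adding it makes it inferable. -/
def Sufficient {X Y : Type*} (C : Set (X × Y) → X → Y) (D' : Set (X × Y)) (e : X × Y) : Prop :=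
  C (insert e D') e.1 = e.2

/-- `(x,y)` is includable w.r.t. `D'` iff it is both surprising and sufficient. -/
def Includable {X Y : Type*} (C : Set (X × Y) → X → Y) (D' : Set (X × Y)) (e : X × Y) : Prop :=
  Surprising C D' e ∧ Sufficient C D' e

/-- `S'` is concise w.r.t. `S` iff `S'` is exactly the set of examples of `S`
includable w.r.t. `S'`. -/
def Concise {X Y : Type*} (C : Set (X × Y) → X → Y) (S' S : Set (X × Y)) : Prop :=
  S' = {e ∈ S | Includable C S' e}

theorem Concise.subset {X Y : Type*} {C : Set (X × Y) → X → Y} {S' S : Set (X × Y)}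
    (h : Concise C S' S) : S' ⊆ S :=
  (Eq.subset h).trans (Set.sep_subset S _)

theorem not_surprising_of_notMem {X Y : Type*} {C : Set (X × Y) → X → Y} {D' : Set (X × Y)}
    {e : X × Y} (he : e ∉ D') (hpred : C D' e.1 = e.2) : ¬ Surprising C D' e := by
  rw [Surprising, Set.sdiff_singleton_eq_self he, not_not]
  exact hpred

theorem Concise.union_singleton {X Y : Type*} {C : Set (X × Y) → X → Y} {S' S : Set (X × Y)}
    {e : X × Y} (h : Concise C S' S) (he : ¬ Includable C S' e) :
    Concise C S' (S ∪ {e}) := by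
  have hnone : {x ∈ ({e} : Set (X × Y)) | Includable C S' x} = ∅ :=
    Set.sep_eq_empty_iff_mem_false.2 fun _ hx => hx ▸ he
  calc S' = {x ∈ S | Includable C S' x} ∪ ∅ := by rw [Set.union_empty]; exact h
    _ = {x ∈ S ∪ {e} | Includable C S' x} := by rw [← hnone]; exact Set.sep_union.symm

/-- If `D'` is concise w.r.t. `D`, `(x,y) ∉ D` is a new example, and the inference
from `D'` predicts `(x,y)`, then `(x,y)` is not includable w.r.t. `D'` and
`D'` remains concise w.r.t. `D ∪ {(x,y)}`. -/
theorem concise_stable_under_predicted_example {X Y : Type*}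
    (C : Set (X × Y) → X → Y) (D D' : Set (X × Y)) (e : X × Y)
    (hconc : Concise C D' D) (hnew : e ∉ D) (hpred : C D' e.1 = e.2) :
    ¬ Includable C D' e ∧ Concise C D' (D ∪ {e}) := by
  have hnotIncl : ¬ Includable C D' e := fun hincl =>
    not_surprising_of_notMem (fun he => hnew (hconc.subset he)) hpred hincl.1
  exact ⟨hnotIncl, hconc.union_singleton hnotIncl⟩
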